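/- arXiv:2309.14240 — 2 statements merged into one kernel-verified Lean document; each statement's English description precedes it below -/
import Mathlib

section
/- Let β ≥ sup_x (3 - 2λ(x))/(1 + 2λ(x)) and β ≤ inf_x (3 + 2λ(x))/(1 - 2λ(x)), where λ : X → (0, 1/2]. Then for every selector g : X → {-1,+1}, the weighted selector risk gap satisfies R(g; f*, β) - R(g*; f*, β) = E_x[(β(1/4 + λ(x)/2) - 3/4 + λ(x)/2)·1{g(x)=1}·1{g*(x)≠1}] + E_x[(3/4 + λ(x)/2 - β(1/4 - λ(x)/2))·1{g(x)≠1}·1{g*(x)=1}] ≥ 0, so g* minimizes R(·; f*, β). -/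
set_option maxHeartbeats 1000000

open MeasureTheory

open Classical in
/-- Real-valued indicator of a proposition. -/
noncomputable def ind (P : Prop) : ℝ := if P then 1 else 0

/-- Population selector risk `R(g; f*, β)` under the Noisy Generative Process,
where the conditional label law is `P[y = f*(x) | x] = 3/4 + g*(x)·λ(x)/2`,
so that `P[f*(x) ≠ y | x] = 1/4 - g*(x)·λ(x)/2`.  Here `g* = +1` on `Ω_I` and
`-1` on `Ω_U`. -/
noncomputable def selRisk {X : Type*} [MeasurableSpace X] (μ : Measure X)
    (lam gstar : X → ℝ) (β : ℝ) (g : X → ℝ) : ℝ :=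
  ∫ x, (β * (1 / 4 - gstar x * lam x / 2) * ind (g x = 1)
      + (3 / 4 + gstar x * lam x / 2) * ind (g x ≠ 1)) ∂μ

open Classical in
lemma ind_eq (P : Prop) : ind P = if P then 1 else 0 := rfl

lemma ind_true {P : Prop} (h : P) : ind P = 1 := by rw [ind_eq, if_pos h]

lemma ind_false {P : Prop} (h : ¬P) : ind P = 0 := by rw [ind_eq, if_neg h]

lemma measurable_ind_eq {X : Type*} [MeasurableSpace X] {g : X → ℝ} (hmg : Measurable g)
    (c : ℝ) : Measurable (fun x => ind (g x = c)) := by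
  simp only [ind_eq]
  exact Measurable.ite (hmg (measurableSet_singleton c)) measurable_const measurable_const

lemma measurable_ind_ne {X : Type*} [MeasurableSpace X] {g : X → ℝ} (hmg : Measurable g)
    (c : ℝ) : Measurable (fun x => ind (g x ≠ c)) := by
  simp only [ind_eq]
  exact Measurable.ite (hmg (measurableSet_singleton c)).compl measurable_const measurable_const

lemma integrable_of_bdd {X : Type*} [MeasurableSpace X] (μ : Measure X) [IsFiniteMeasure μ]
    {f : X → ℝ} (hf : Measurable f) (C : ℝ) (h : ∀ x, -C ≤ f x ∧ f x ≤ C) :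
    Integrable f μ :=
  integrable_of_le_of_le hf.aestronglyMeasurable
    (Filter.Eventually.of_forall fun x => (h x).1)
    (Filter.Eventually.of_forall fun x => (h x).2)
    (integrable_const _) (integrable_const _)

/-- for `β` between `sup_x (3-2λ(x))/(1+2λ(x))` and
`inf_x (3+2λ(x))/(1-2λ(x))` (the latter constraint imposed whenever `λ(x) < 1/2`),
the selector risk gap equals the stated expression, that expression is
nonnegative, and hence `g*` minimizes the selector risk. -/
theorem stmt0 {X : Type*} [MeasurableSpace X] (μ : Measure X) [IsProbabilityMeasure μ]
    (lam : X → ℝ) (hlam : ∀ x, 0 < lam x ∧ lam x ≤ 1 / 2) (hmlam : Measurable lam)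
    (gstar : X → ℝ) (hgstar : ∀ x, gstar x = 1 ∨ gstar x = -1) (hmgstar : Measurable gstar)
    (β : ℝ)
    (hβlo : ∀ x, (3 - 2 * lam x) / (1 + 2 * lam x) ≤ β)
    (hβhi : ∀ x, lam x < 1 / 2 → β ≤ (3 + 2 * lam x) / (1 - 2 * lam x))
    (g : X → ℝ) (hg : ∀ x, g x = 1 ∨ g x = -1) (hmg : Measurable g) :
    selRisk μ lam gstar β g - selRisk μ lam gstar β gstar
      = ∫ x, ((β * (1 / 4 + lam x / 2) - 3 / 4 + lam x / 2)
              * ind (g x = 1) * ind (gstar x ≠ 1)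
            + (3 / 4 + lam x / 2 - β * (1 / 4 - lam x / 2))
              * ind (g x ≠ 1) * ind (gstar x = 1)) ∂μ ∧
    0 ≤ ∫ x, ((β * (1 / 4 + lam x / 2) - 3 / 4 + lam x / 2)
              * ind (g x = 1) * ind (gstar x ≠ 1)
            + (3 / 4 + lam x / 2 - β * (1 / 4 - lam x / 2))
              * ind (g x ≠ 1) * ind (gstar x = 1)) ∂μ ∧
    selRisk μ lam gstar β gstar ≤ selRisk μ lam gstar β g := by
  have hβm : -|β| ≤ β := neg_abs_le β
  have hβM : β ≤ |β| := le_abs_self β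
  have habs : 0 ≤ |β| := abs_nonneg β
  -- helper: resolve ind values for a ±1 valued function
  have hind1 : ∀ (h : X → ℝ) x, h x = 1 → ind (h x = 1) = 1 ∧ ind (h x ≠ 1) = 0 :=
    fun h x hx => ⟨ind_true hx, ind_false (by simp [hx])⟩
  have hindm1 : ∀ (h : X → ℝ) x, h x = -1 → ind (h x = 1) = 0 ∧ ind (h x ≠ 1) = 1 :=
    fun h x hx => ⟨ind_false (by rw [hx]; norm_num), ind_true (by rw [hx]; norm_num)⟩
  have hintF : ∀ h : X → ℝ, Measurable h → (∀ x, h x = 1 ∨ h x = -1) →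
      Integrable (fun x => β * (1 / 4 - gstar x * lam x / 2) * ind (h x = 1)
        + (3 / 4 + gstar x * lam x / 2) * ind (h x ≠ 1)) μ := by
    intro h hmh hvh
    apply integrable_of_bdd μ _ (2 * |β| + 2)
    · intro x
      have hl := hlam x
      rcases hgstar x with hs | hs <;> rcases hvh x with hx | hx <;>
        [rcases hind1 h x hx with ⟨e1, e2⟩; rcases hindm1 h x hx with ⟨e1, e2⟩;
         rcases hind1 h x hx with ⟨e1, e2⟩; rcases hindm1 h x hx with ⟨e1, e2⟩] <;>
        rw [e1, e2, hs] <;> constructor <;> nlinarith [hl.1, hl.2]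
    · exact ((measurable_const.mul ((measurable_const.sub
        ((hmgstar.mul hmlam).div_const 2)))).mul (measurable_ind_eq hmh 1)).add
        ((measurable_const.add ((hmgstar.mul hmlam).div_const 2)).mul
          (measurable_ind_ne hmh 1))
  have hintD : Integrable (fun x => (β * (1 / 4 + lam x / 2) - 3 / 4 + lam x / 2)
        * ind (g x = 1) * ind (gstar x ≠ 1)
      + (3 / 4 + lam x / 2 - β * (1 / 4 - lam x / 2)) * ind (g x ≠ 1) * ind (gstar x = 1)) μ := by
    apply integrable_of_bdd μ _ (2 * |β| + 2)
    · intro x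
      have hl := hlam x
      rcases hgstar x with hs | hs <;> rcases hg x with hx | hx <;>
        [rcases hind1 g x hx with ⟨e1, e2⟩; rcases hindm1 g x hx with ⟨e1, e2⟩;
         rcases hind1 g x hx with ⟨e1, e2⟩; rcases hindm1 g x hx with ⟨e1, e2⟩] <;>
        [rcases hind1 gstar x hs with ⟨f1, f2⟩; rcases hind1 gstar x hs with ⟨f1, f2⟩;
         rcases hindm1 gstar x hs with ⟨f1, f2⟩; rcases hindm1 gstar x hs with ⟨f1, f2⟩] <;>
        rw [e1, e2, f1, f2] <;> constructor <;> nlinarith [hl.1, hl.2]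
    · exact ((((measurable_const.mul (measurable_const.add (hmlam.div_const 2))).sub
        measurable_const).add (hmlam.div_const 2)).mul
        (measurable_ind_eq hmg 1) |>.mul (measurable_ind_ne hmgstar 1)).add
        (((measurable_const.add (hmlam.div_const 2)).sub
          (measurable_const.mul (measurable_const.sub (hmlam.div_const 2)))).mul
          (measurable_ind_ne hmg 1) |>.mul (measurable_ind_eq hmgstar 1))
  -- pointwise identity
  have key : ∀ x,
      (β * (1 / 4 - gstar x * lam x / 2) * ind (g x = 1)
        + (3 / 4 + gstar x * lam x / 2) * ind (g x ≠ 1))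
      - (β * (1 / 4 - gstar x * lam x / 2) * ind (gstar x = 1)
        + (3 / 4 + gstar x * lam x / 2) * ind (gstar x ≠ 1))
      = (β * (1 / 4 + lam x / 2) - 3 / 4 + lam x / 2) * ind (g x = 1) * ind (gstar x ≠ 1)
        + (3 / 4 + lam x / 2 - β * (1 / 4 - lam x / 2)) * ind (g x ≠ 1) * ind (gstar x = 1) := by
    intro x
    rcases hgstar x with hs | hs <;> rcases hg x with hx | hx <;>
      [rcases hind1 g x hx with ⟨e1, e2⟩; rcases hindm1 g x hx with ⟨e1, e2⟩;
       rcases hind1 g x hx with ⟨e1, e2⟩; rcases hindm1 g x hx with ⟨e1, e2⟩] <;>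
      [rcases hind1 gstar x hs with ⟨f1, f2⟩; rcases hind1 gstar x hs with ⟨f1, f2⟩;
       rcases hindm1 gstar x hs with ⟨f1, f2⟩; rcases hindm1 gstar x hs with ⟨f1, f2⟩] <;>
      rw [e1, e2, f1, f2, hs] <;> ring
  have hEq : selRisk μ lam gstar β g - selRisk μ lam gstar β gstar
      = ∫ x, ((β * (1 / 4 + lam x / 2) - 3 / 4 + lam x / 2)
              * ind (g x = 1) * ind (gstar x ≠ 1)
            + (3 / 4 + lam x / 2 - β * (1 / 4 - lam x / 2))
              * ind (g x ≠ 1) * ind (gstar x = 1)) ∂μ := by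
    unfold selRisk
    rw [← integral_sub (hintF g hmg hg) (hintF gstar hmgstar hgstar)]
    exact integral_congr_ae (Filter.Eventually.of_forall key)
  have hDnn : ∀ x, 0 ≤ (β * (1 / 4 + lam x / 2) - 3 / 4 + lam x / 2)
        * ind (g x = 1) * ind (gstar x ≠ 1)
      + (3 / 4 + lam x / 2 - β * (1 / 4 - lam x / 2)) * ind (g x ≠ 1) * ind (gstar x = 1) := by
    intro x
    have hl := hlam x
    rcases hgstar x with hs | hs <;> rcases hg x with hx | hx <;>
      [rcases hind1 g x hx with ⟨e1, e2⟩; rcases hindm1 g x hx with ⟨e1, e2⟩;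
       rcases hind1 g x hx with ⟨e1, e2⟩; rcases hindm1 g x hx with ⟨e1, e2⟩] <;>
      [rcases hind1 gstar x hs with ⟨f1, f2⟩; rcases hind1 gstar x hs with ⟨f1, f2⟩;
       rcases hindm1 gstar x hs with ⟨f1, f2⟩; rcases hindm1 gstar x hs with ⟨f1, f2⟩] <;>
      rw [e1, e2, f1, f2] <;> ring_nf
    · norm_num
    · -- g = -1, gstar = 1 : need 0 ≤ 3/4 + l/2 - β*(1/4 - l/2)
      have : β * (1 / 4 - lam x / 2) ≤ 3 / 4 + lam x / 2 := by
        rcases lt_or_eq_of_le hl.2 with h | h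
        · have h1 := hβhi x h
          have h2 : (0:ℝ) < 1 - 2 * lam x := by linarith
          rw [le_div_iff₀ h2] at h1
          nlinarith
        · rw [h]; norm_num
      linarith
    · -- g = 1, gstar = -1 : need 0 ≤ β*(1/4+l/2) - 3/4 + l/2
      have h1 := hβlo x
      have h2 : (0:ℝ) < 1 + 2 * lam x := by linarith [hl.1]
      rw [div_le_iff₀ h2] at h1
      nlinarith [hl.1]
    · norm_num
  have hnn : 0 ≤ ∫ x, ((β * (1 / 4 + lam x / 2) - 3 / 4 + lam x / 2)
              * ind (g x = 1) * ind (gstar x ≠ 1)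
            + (3 / 4 + lam x / 2 - β * (1 / 4 - lam x / 2))
              * ind (g x ≠ 1) * ind (gstar x = 1)) ∂μ := integral_nonneg hDnn
  exact ⟨hEq, hnn, by linarith⟩
end

section
/- Sauer–Shelah Lemma bound: if G is a hypothesis class of {-1,+1}-valued functions with VC dimension d = d_VC(G) ≥ 1, then for all n ∈ ℕ the growth function satisfies B_G(n) ≤ Σ_{i=0}^{d} C(n, i) ≤ (e·n/d)^d, where the latter inequality holds for n ≥ d. -/
/-- Sauer–Shelah bound: if `G` is a class of binary functions with
VC dimension at most `d` (every shattered finite set has cardinality `≤ d`),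
then the growth function of `G` on any `n` points is at most
`Σ_{i=0}^{d} C(n,i)`, and for `n ≥ d ≥ 1` this sum is at most `(e·n/d)^d`. -/
theorem stmt15 {X : Type*} (G : Set (X → Bool)) (d n : ℕ) (hd1 : 1 ≤ d)
    (hVC : ∀ s : Finset X,
      (∀ b : X → Bool, ∃ g ∈ G, ∀ x ∈ s, g x = b x) → s.card ≤ d) :
    (∀ xs : Fin n → X,
      Set.ncard ((fun g : X → Bool => fun j : Fin n => g (xs j)) '' G)
        ≤ ∑ i ∈ Finset.range (d + 1), n.choose i) ∧
    (d ≤ n →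
      ((∑ i ∈ Finset.range (d + 1), n.choose i : ℕ) : ℝ)
        ≤ (Real.exp 1 * (n : ℝ) / (d : ℝ)) ^ d) := by
  classical
  constructor
  · -- Sauer–Shelah counting bound
    intro xs
    set F : Set (Fin n → Bool) := (fun g : X → Bool => fun j : Fin n => g (xs j)) '' G with hF
    set Φ : (Fin n → Bool) → Finset (Fin n) := fun f => Finset.univ.filter (fun j => f j = true)
      with hΦ
    have hΦmem : ∀ f j, j ∈ Φ f ↔ f j = true := by
      intro f j; simp [hΦ]
    have hΦinj : Function.Injective Φ := by
      intro f₁ f₂ h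
      funext j
      have := Finset.ext_iff.1 h j
      rw [hΦmem, hΦmem] at this
      cases hb : f₂ j
      · cases hb' : f₁ j
        · rfl
        · exact absurd (this.1 hb') (by simp [hb])
      · exact this.2 hb
    have hfin : (Φ '' F).Finite := Set.toFinite _
    set 𝒜 : Finset (Finset (Fin n)) := hfin.toFinset with h𝒜
    have hmem𝒜 : ∀ u, u ∈ 𝒜 ↔ ∃ g ∈ G, u = Φ (fun j => g (xs j)) := by
      intro u
      simp only [h𝒜, Set.Finite.mem_toFinset, Set.mem_image, hF]
      constructor
      · rintro ⟨f, ⟨g, hg, rfl⟩, rfl⟩; exact ⟨g, hg, rfl⟩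
      · rintro ⟨g, hg, rfl⟩; exact ⟨_, ⟨g, hg, rfl⟩, rfl⟩
    have hcard : Set.ncard F = 𝒜.card := by
      rw [h𝒜, ← Set.ncard_coe_finset, Set.Finite.coe_toFinset,
        Set.ncard_image_of_injective _ hΦinj]
    -- the VC dimension of 𝒜 is at most d
    have hvc : 𝒜.vcDim ≤ d := by
      apply Finset.sup_le
      intro s hs
      have hsh : 𝒜.Shatters s := Finset.mem_shatterer.1 hs
      -- xs is injective on s
      have hinj : Set.InjOn xs s := by
        intro j₁ hj₁ j₂ hj₂ heq
        by_contra hne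
        obtain ⟨u, hu, hsu⟩ := hsh (t := {j₁}) (by simpa using hj₁)
        obtain ⟨g, _, rfl⟩ := (hmem𝒜 u).1 hu
        have h1 : j₁ ∈ ({j₁} : Finset (Fin n)) := Finset.mem_singleton_self _
        rw [← hsu, Finset.mem_inter, hΦmem] at h1
        have h2 : j₂ ∉ ({j₁} : Finset (Fin n)) := by simpa using (Ne.symm hne)
        rw [← hsu, Finset.mem_inter, hΦmem] at h2
        push_neg at h2
        exact h2 hj₂ (heq ▸ h1.2)
      have hcard' : (s.image xs).card = s.card := Finset.card_image_of_injOn hinj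
      rw [← hcard']
      apply hVC
      intro b
      obtain ⟨u, hu, hsu⟩ := hsh (t := s.filter (fun j => b (xs j) = true))
        (Finset.filter_subset _ _)
      obtain ⟨g, hg, rfl⟩ := (hmem𝒜 u).1 hu
      refine ⟨g, hg, ?_⟩
      intro x hx
      obtain ⟨j, hj, rfl⟩ := Finset.mem_image.1 hx
      have := Finset.ext_iff.1 hsu j
      rw [Finset.mem_inter, hΦmem, Finset.mem_filter] at this
      cases hb : b (xs j)
      · cases hb' : g (xs j)
        · rfl
        · have : j ∈ s ∧ b (xs j) = true := this.1 ⟨hj, hb'⟩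
          rw [hb] at this; exact absurd this.2 (by simp)
      · exact (this.2 ⟨hj, hb⟩).2
    -- conclude
    rw [hcard]
    calc 𝒜.card ≤ 𝒜.shatterer.card := Finset.card_le_card_shatterer 𝒜
      _ ≤ ∑ k ∈ Finset.Iic 𝒜.vcDim, (Fintype.card (Fin n)).choose k :=
          Finset.card_shatterer_le_sum_vcDim
      _ ≤ ∑ k ∈ Finset.Iic d, (Fintype.card (Fin n)).choose k := by
          apply Finset.sum_le_sum_of_subset
          intro k hk
          simp only [Finset.mem_Iic] at *
          exact hk.trans hvc
      _ = ∑ i ∈ Finset.range (d + 1), n.choose i := by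
          have hIic : Finset.Iic d = Finset.range (d + 1) := by
            ext k; simp [Nat.lt_succ_iff]
          simp [hIic, Fintype.card_fin]
  · -- the analytic bound
    intro hdn
    have hn1 : 1 ≤ n := hd1.trans hdn
    have hd0 : (0 : ℝ) < d := by exact_mod_cast hd1
    have hn0 : (0 : ℝ) < n := by exact_mod_cast hn1
    set x : ℝ := (d : ℝ) / n with hx
    have hx0 : 0 < x := div_pos hd0 hn0
    have hx1 : x ≤ 1 := by
      rw [hx, div_le_one hn0]; exact_mod_cast hdn
    set A : ℝ := ((∑ i ∈ Finset.range (d + 1), n.choose i : ℕ) : ℝ) with hA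
    have key : A * x ^ d ≤ Real.exp 1 ^ d := by
      have h1 : A * x ^ d ≤ ∑ i ∈ Finset.range (d + 1), (n.choose i : ℝ) * x ^ i := by
        rw [hA, Nat.cast_sum, Finset.sum_mul]
        apply Finset.sum_le_sum
        intro i hi
        have hi' : i ≤ d := Nat.lt_succ_iff.1 (Finset.mem_range.1 hi)
        exact mul_le_mul_of_nonneg_left
          (pow_le_pow_of_le_one hx0.le hx1 hi') (Nat.cast_nonneg _)
      have h2 : ∑ i ∈ Finset.range (d + 1), (n.choose i : ℝ) * x ^ i
          ≤ ∑ i ∈ Finset.range (n + 1), (n.choose i : ℝ) * x ^ i := by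
        apply Finset.sum_le_sum_of_subset_of_nonneg
        · exact Finset.range_subset_range.2 (by omega)
        · intro i _ _
          positivity
      have h3 : ∑ i ∈ Finset.range (n + 1), (n.choose i : ℝ) * x ^ i = (1 + x) ^ n := by
        rw [show (1 : ℝ) + x = x + 1 from add_comm 1 x, add_pow]
        apply Finset.sum_congr rfl
        intro i _
        simp [mul_comm]
      have h4 : (1 + x) ^ n ≤ Real.exp 1 ^ d := by
        calc (1 + x) ^ n ≤ Real.exp x ^ n := by
              apply pow_le_pow_left₀ (by positivity)
              linarith [Real.add_one_le_exp x]
          _ = Real.exp ((n : ℝ) * x) := by rw [Real.exp_nat_mul]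
          _ = Real.exp d := by
              congr 1
              rw [hx]; field_simp
          _ = Real.exp 1 ^ d := by rw [← Real.exp_nat_mul, mul_one]
      linarith
    have hsplit : (Real.exp 1 * (n : ℝ) / (d : ℝ)) ^ d
        = Real.exp 1 ^ d * ((n : ℝ) / d) ^ d := by
      rw [← mul_pow]; ring_nf
    rw [hsplit]
    have hinv : x ^ d * ((n : ℝ) / d) ^ d = 1 := by
      rw [← mul_pow, hx]
      field_simp
      rw [one_pow]
    calc A = A * (x ^ d * ((n : ℝ) / d) ^ d) := by rw [hinv, mul_one]
      _ = (A * x ^ d) * ((n : ℝ) / d) ^ d := by ring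
      _ ≤ Real.exp 1 ^ d * ((n : ℝ) / d) ^ d := by
          apply mul_le_mul_of_nonneg_right key (by positivity)
end
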